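/- arXiv:2311.18387 — 2 statements merged into one kernel-verified Lean document; each statement's English description precedes it below -/
import Mathlib

section
/- Define the backward Euler map Φ(x) = a • x - b • x_θ(x) (mapping x_{t_{i-1}} to x_{t_i} as in one DDIM sampling step). If x_θ is L-Lipschitz and |b| · L < |a| with a ≠ 0, then Φ is injective; moreover Φ is surjective, hence bijective, so each DDIM sampling step has a unique exact inverse. -/
/-- The DDIM sampling step `Φ(x) = a • x - b • x_θ(x)` with `x_θ` `L`-Lipschitz and
`|b| * L < |a|`, `a ≠ 0`, is bijective: each DDIM step has a unique exact inverse. -/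
theorem ddim_step_bijective {E : Type*} [NormedAddCommGroup E] [NormedSpace ℝ E]
    [CompleteSpace E]
    (xθ : E → E) (L a b : ℝ) (ha : a ≠ 0)
    (hθ : ∀ x y, ‖xθ x - xθ y‖ ≤ L * ‖x - y‖)
    (hcontr : |b| * L < |a|) :
    Function.Bijective (fun x : E => a • x - b • xθ x) := by
  -- replace L by max L 0
  set L' : ℝ := max L 0 with hL'
  have hL'0 : 0 ≤ L' := le_max_right _ _
  have hθ' : ∀ x y, ‖xθ x - xθ y‖ ≤ L' * ‖x - y‖ := fun x y =>
    (hθ x y).trans (mul_le_mul_of_nonneg_right (le_max_left _ _) (norm_nonneg _))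
  have hcontr' : |b| * L' < |a| := by
    rcases le_or_gt L 0 with h | h
    · have : L' = 0 := max_eq_right h
      rw [this, mul_zero]
      exact abs_pos.mpr ha
    · rwa [hL', max_eq_left h.le]
  have ha0 : 0 < |a| := abs_pos.mpr ha
  constructor
  · intro x y hxy
    simp only at hxy
    have h1 : a • (x - y) = b • (xθ x - xθ y) := by
      rw [smul_sub, smul_sub]; abel_nf
      abel_nf at hxy
      linear_combination (norm := abel) hxy
    have h2 : |a| * ‖x - y‖ ≤ |b| * L' * ‖x - y‖ := by
      calc |a| * ‖x - y‖ = ‖a • (x - y)‖ := (norm_smul a (x - y)).symm ▸ rfl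
        _ = ‖b • (xθ x - xθ y)‖ := by rw [h1]
        _ = |b| * ‖xθ x - xθ y‖ := by rw [norm_smul, Real.norm_eq_abs]
        _ ≤ |b| * (L' * ‖x - y‖) :=
            mul_le_mul_of_nonneg_left (hθ' x y) (abs_nonneg b)
        _ = |b| * L' * ‖x - y‖ := by ring
    by_contra hne
    have hpos : 0 < ‖x - y‖ := by
      rw [norm_pos_iff, sub_ne_zero]; exact fun h => hne (by rw [h])
    have := lt_of_le_of_lt h2 (mul_lt_mul_of_pos_right hcontr' hpos)
    exact lt_irrefl _ this
  · intro y
    set K : NNReal := ⟨|a|⁻¹ * (|b| * L'), by positivity⟩ with hK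
    have hK1 : K < 1 := by
      rw [← NNReal.coe_lt_coe]
      show |a|⁻¹ * (|b| * L') < 1
      rw [inv_mul_lt_iff₀ ha0, mul_one]
      exact hcontr'
    have hg : ContractingWith K (fun x : E => a⁻¹ • (y + b • xθ x)) := by
      refine ⟨hK1, LipschitzWith.of_dist_le_mul fun x z => ?_⟩
      simp only [dist_eq_norm]
      have : a⁻¹ • (y + b • xθ x) - a⁻¹ • (y + b • xθ z)
          = a⁻¹ • (b • (xθ x - xθ z)) := by
        rw [← smul_sub]; congr 1; rw [smul_sub]; abel
      rw [this, norm_smul, norm_smul, Real.norm_eq_abs, Real.norm_eq_abs, abs_inv]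
      show |a|⁻¹ * (|b| * ‖xθ x - xθ z‖) ≤ |a|⁻¹ * (|b| * L') * ‖x - z‖
      rw [mul_assoc, mul_assoc]
      gcongr
      exact hθ' x z
    obtain ⟨x, hx, -⟩ := hg.exists_fixedPoint 0 (by
      simp [edist_ne_top])
    refine ⟨x, ?_⟩
    have hx' : a⁻¹ • (y + b • xθ x) = x := hx
    have : y + b • xθ x = a • x := by
      have := congrArg (a • ·) hx'
      simpa [smul_smul, ← mul_assoc, mul_inv_cancel₀ ha] using this
    simp only
    rw [← this]; abel
end

section
/- Fix the log-SNR reparameterization λ_t = log(α_t/σ_t) with σ_t > 0 and α_t > 0. If x_t satisfies the diffusion ODE dx_t/dt = (f(t) + g²(t)/(2σ_t²)) x_t - (α_t g²(t)/(2σ_t²)) x_θ(x_t, t), where f(t) = d log α_t/dt and g²(t) = dσ_t²/dt - 2 (d log α_t/dt) σ_t², then the function u(t) = x_t/σ_t satisfies du/dt = e^{λ_t} (dλ_t/dt) x_θ(x_t, t); equivalently, x_t = (σ_t/σ_s) x_s + σ_t ∫_{λ_s}^{λ_t} e^{λ} x_θ(x_λ, λ) dλ. -/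
/-!
Dividing by `σ_t` is an integrating factor for the diffusion ODE: with `f = α'/α` and
`g² = 2σσ' - 2fσ²` the linear coefficient `f + g²/(2σ²)` equals `σ'/σ`, so it cancels against
the derivative of `σ⁻¹`. What remains is `-(α g²/(2σ²))/σ · x_θ = (α/σ)(α'/α - σ'/σ) · x_θ`,
and `α/σ = e^λ`, `α'/α - σ'/σ = λ'`. Integrating `u' = e^λ λ' x_θ` from `s` to `t` gives the
exponential-integrator formula.
-/

open intervalIntegral

theorem HasDerivAt.inv_smul_of_linear {𝕜 E : Type*} [NontriviallyNormedField 𝕜]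
    [NormedAddCommGroup E] [NormedSpace 𝕜 E] {σ : 𝕜 → 𝕜} {x : 𝕜 → E} {σ' : 𝕜} {v : E} {t : 𝕜}
    (hσ : HasDerivAt σ σ' t) (hσt : σ t ≠ 0) (hx : HasDerivAt x ((σ' / σ t) • x t + v) t) :
    HasDerivAt (fun r => (σ r)⁻¹ • x r) ((σ t)⁻¹ • v) t := by
  refine ((hσ.fun_inv hσt).smul hx).congr_deriv ?_
  have hcancel : (σ t)⁻¹ * (σ' / σ t) + -σ' / σ t ^ 2 = 0 := by
    field_simp
    ring
  rw [smul_add, smul_smul, add_right_comm, ← add_smul, hcancel, zero_smul, zero_add]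

theorem hasDerivAt_log_div {α σ : ℝ → ℝ} {α' σ' t : ℝ} (hα : HasDerivAt α α' t)
    (hσ : HasDerivAt σ σ' t) (hαt : α t ≠ 0) (hσt : σ t ≠ 0) :
    HasDerivAt (fun r => Real.log (α r / σ r)) (α' / α t - σ' / σ t) t := by
  refine ((hα.fun_div hσ hσt).log (div_ne_zero hαt hσt)).congr_deriv ?_
  field_simp

theorem hasDerivAt_inv_smul_of_diffusion_ode {E : Type*} [NormedAddCommGroup E]
    [NormedSpace ℝ E] {σ : ℝ → ℝ} {x : ℝ → E} {σ' a f t : ℝ} {y : E}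
    (hσ : HasDerivAt σ σ' t) (hσt : σ t ≠ 0)
    (hx : HasDerivAt x ((f + (2 * σ t * σ' - 2 * f * σ t ^ 2) / (2 * σ t ^ 2)) • x t
      - (a * (2 * σ t * σ' - 2 * f * σ t ^ 2) / (2 * σ t ^ 2)) • y) t) :
    HasDerivAt (fun r => (σ r)⁻¹ • x r) ((a / σ t * (f - σ' / σ t)) • y) t := by
  have hdrift : f + (2 * σ t * σ' - 2 * f * σ t ^ 2) / (2 * σ t ^ 2) = σ' / σ t := by
    field_simp
    ring
  rw [hdrift, sub_eq_add_neg, ← neg_smul] at hx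
  refine (hσ.inv_smul_of_linear hσt hx).congr_deriv ?_
  rw [smul_smul]
  congr 1
  field_simp
  ring

theorem diffusion_ode_exponential_integrator_general {D : ℕ} (T : ℝ)
    (α σ : ℝ → ℝ) (hα : Differentiable ℝ α) (hσ : Differentiable ℝ σ)
    (hαpos : ∀ t, 0 < α t) (hσpos : ∀ t, 0 < σ t)
    (lam : ℝ → ℝ) (hlam : ∀ t, lam t = Real.log (α t / σ t))
    (hlam' : Continuous (fun t => deriv lam t))
    (x : ℝ → EuclideanSpace ℝ (Fin D))
    (xθ : EuclideanSpace ℝ (Fin D) → ℝ → EuclideanSpace ℝ (Fin D))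
    (hxθ : Continuous (fun t => xθ (x t) t))
    (fd g2 : ℝ → ℝ)
    (hfd : ∀ t, fd t = deriv (fun s => Real.log (α s)) t)
    (hg2 : ∀ t, g2 t = deriv (fun s => (σ s) ^ 2) t - 2 * fd t * (σ t) ^ 2)
    (hODE : ∀ t ∈ Set.Icc 0 T, HasDerivAt x
      ((fd t + g2 t / (2 * (σ t) ^ 2)) • x t
        - (α t * g2 t / (2 * (σ t) ^ 2)) • xθ (x t) t) t)
    (u : ℝ → EuclideanSpace ℝ (Fin D)) (hu : ∀ t, u t = (σ t)⁻¹ • x t) :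
    (∀ t ∈ Set.Icc 0 T, HasDerivAt u
        ((Real.exp (lam t) * deriv lam t) • xθ (x t) t) t) ∧
      ∀ s ∈ Set.Icc 0 T, ∀ t ∈ Set.Icc 0 T,
        x t = (σ t / σ s) • x s
          + σ t • ∫ r in s..t, (Real.exp (lam r) * deriv lam r) • xθ (x r) r := by
  have hlam_deriv : ∀ t, HasDerivAt lam (deriv α t / α t - deriv σ t / σ t) t := fun t => by
    rw [funext hlam]
    exact hasDerivAt_log_div (hα t).hasDerivAt (hσ t).hasDerivAt (hαpos t).ne'
      (hσpos t).ne'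
  have hfd_eq : ∀ t, fd t = deriv α t / α t := fun t => by
    rw [hfd t, ((hα t).hasDerivAt.log (hαpos t).ne').deriv]
  have hσsq_deriv : ∀ t, deriv (fun s => σ s ^ 2) t = 2 * σ t * deriv σ t := fun t => by
    rw [((hσ t).hasDerivAt.fun_pow 2).deriv]
    push_cast
    ring
  have hu_deriv : ∀ t ∈ Set.Icc 0 T, HasDerivAt u
      ((Real.exp (lam t) * deriv lam t) • xθ (x t) t) t := by
    intro t ht
    have hx := hODE t ht
    rw [hg2 t, hσsq_deriv t, hfd_eq t] at hx
    rw [funext hu, (hlam_deriv t).deriv, hlam t, Real.exp_log (div_pos (hαpos t) (hσpos t))]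
    exact hasDerivAt_inv_smul_of_diffusion_ode (hσ t).hasDerivAt (hσpos t).ne' hx
  refine ⟨hu_deriv, fun s hs t ht => ?_⟩
  have hlam_cont : Continuous lam :=
    continuous_iff_continuousAt.2 fun r => (hlam_deriv r).continuousAt
  have hintegrand_cont : Continuous (fun r => (Real.exp (lam r) * deriv lam r) • xθ (x r) r) :=
    ((Real.continuous_exp.comp hlam_cont).mul hlam').smul hxθ
  rw [integral_eq_sub_of_hasDerivAt (fun r hr => hu_deriv r (Set.uIcc_subset_Icc hs ht hr))
    (hintegrand_cont.intervalIntegrable s t), hu t, hu s, smul_sub, smul_smul, smul_smul,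
    mul_inv_cancel₀ (hσpos t).ne', one_smul, ← div_eq_mul_inv, add_sub_cancel]

/-- Exponential-integrator form of the diffusion ODE: if `x` solves the diffusion ODE
with `f(t) = d log α_t/dt` and `g²(t) = dσ_t²/dt - 2 (d log α_t/dt) σ_t²`, then
`u(t) = x_t/σ_t` satisfies `du/dt = e^{λ_t} (dλ_t/dt) x_θ(x_t, t)`; equivalently
`x_t = (σ_t/σ_s) x_s + σ_t ∫_{λ_s}^{λ_t} e^λ x_θ(x_λ, λ) dλ` (written as a `t`-integral
via the change of variables `λ = λ_r`). -/
theorem diffusion_ode_exponential_integrator {D : ℕ} (T : ℝ) (hT : 0 < T)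
    (α σ : ℝ → ℝ) (hα : Differentiable ℝ α) (hσ : Differentiable ℝ σ)
    (hαpos : ∀ t, 0 < α t) (hσpos : ∀ t, 0 < σ t)
    (lam : ℝ → ℝ) (hlam : ∀ t, lam t = Real.log (α t / σ t))
    (hanti : StrictAntiOn lam (Set.Icc 0 T))
    (hlam' : Continuous (fun t => deriv lam t))
    (x : ℝ → EuclideanSpace ℝ (Fin D)) (hx : Differentiable ℝ x)
    (xθ : EuclideanSpace ℝ (Fin D) → ℝ → EuclideanSpace ℝ (Fin D))
    (hxθ : Continuous (fun t => xθ (x t) t))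
    (fd g2 : ℝ → ℝ)
    (hfd : ∀ t, fd t = deriv (fun s => Real.log (α s)) t)
    (hg2 : ∀ t, g2 t = deriv (fun s => (σ s) ^ 2) t - 2 * fd t * (σ t) ^ 2)
    (hODE : ∀ t ∈ Set.Icc 0 T, HasDerivAt x
      ((fd t + g2 t / (2 * (σ t) ^ 2)) • x t
        - (α t * g2 t / (2 * (σ t) ^ 2)) • xθ (x t) t) t)
    (u : ℝ → EuclideanSpace ℝ (Fin D)) (hu : ∀ t, u t = (σ t)⁻¹ • x t) :
    (∀ t ∈ Set.Icc 0 T, HasDerivAt u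
        ((Real.exp (lam t) * deriv lam t) • xθ (x t) t) t) ∧
      ∀ s ∈ Set.Icc 0 T, ∀ t ∈ Set.Icc 0 T,
        x t = (σ t / σ s) • x s
          + σ t • ∫ r in s..t, (Real.exp (lam r) * deriv lam r) • xθ (x r) r :=
  diffusion_ode_exponential_integrator_general T α σ hα hσ hαpos hσpos lam hlam hlam' x xθ hxθ fd g2
    hfd hg2 hODE u hu
end
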